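/- For any nonzero real number a and any positive integer n, ∑_{k=1}^{n} C(2n,2k) 2^{2k} E_{2n-2k,a} = 2/a + (2-4a)/a^2 · E_{2n,a}. -/

import Mathlib

/-!
Let `ε = ∑ E_{n,a} Xⁿ/n!`. The recurrence defining `E` says exactly that
`(a cosh X + 1 - a) ε = 1`, and the left-hand side of the theorem is `(2n)!` times the
coefficient of `X^{2n}` in `(cosh 2X - 1) ε`. Since `cosh 2X = 2 cosh² X - 1`, using the
first identity twice to eliminate `a cosh X · ε` turns `a² cosh 2X · ε` into a combination
of `cosh X`, `1` and `ε`, whose coefficients give the formula.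
-/

open Finset

noncomputable def E (a : ℝ) : ℕ → ℝ
  | 0 => 1
  | n + 1 =>
      -a * ∑ k ∈ (Finset.Icc 1 ((n + 1) / 2)).attach,
        ((n + 1).choose (2 * k.1) : ℝ) * E a (n + 1 - 2 * k.1)
  decreasing_by
    have h := Finset.mem_Icc.mp k.2
    omega

noncomputable def EP (a : ℝ) (n : ℕ) (x : ℝ) : ℝ :=
  ∑ k ∈ Finset.range (n + 1), (n.choose k : ℝ) * E a k * x ^ (n - k)

open PowerSeries
open scoped Nat

theorem sum_range_ite_even {M : Type*} [AddCommMonoid M] (g : ℕ → M) (N : ℕ) :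
    ∑ m ∈ range (N + 1), (if Even m then g m else 0) =
      ∑ k ∈ range (N / 2 + 1), g (2 * k) := by
  induction N with
  | zero => simp
  | succ N ih =>
    rw [sum_range_succ, ih]
    rcases Nat.even_or_odd N with ⟨j, rfl⟩ | ⟨j, rfl⟩
    · have hodd : ¬ Even (j + j + 1) := by simp [parity_simps]
      have hhalf : (j + j + 1) / 2 = (j + j) / 2 := by omega
      rw [if_neg hodd, add_zero, hhalf]
    · have heven : Even (2 * j + 1 + 1) := ⟨j + 1, by ring⟩
      have hhalf : (2 * j + 1 + 1) / 2 = (2 * j + 1) / 2 + 1 := by omega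
      rw [if_pos heven, hhalf, sum_range_succ (n := (2 * j + 1) / 2 + 1)]
      congr 2; omega

section
variable {A : Type*} [Field A] [CharZero A]

noncomputable def egf (f : ℕ → A) : A⟦X⟧ :=
  mk fun n => f n / n !

noncomputable def coshSeries (t : A) : A⟦X⟧ :=
  C (2⁻¹ : A) * (rescale t (exp A) + rescale (-t) (exp A))

theorem coshSeries_two_mul (t : A) : coshSeries (2 * t) = 2 * coshSeries t ^ 2 - 1 := by
  have hpos : rescale t (exp A) * rescale t (exp A) = rescale (2 * t) (exp A) := by
    rw [exp_mul_exp_eq_exp_add, two_mul]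
  have hneg : rescale (-t) (exp A) * rescale (-t) (exp A) = rescale (-(2 * t)) (exp A) := by
    rw [exp_mul_exp_eq_exp_add]; ring_nf
  have hmix : rescale t (exp A) * rescale (-t) (exp A) = 1 := by
    rw [exp_mul_exp_eq_exp_add, add_neg_cancel, rescale_zero]; simp
  have hhalf : C (2⁻¹ : A) * 2 = 1 := by
    rw [← map_ofNat C 2, ← map_mul, inv_mul_cancel₀ two_ne_zero, map_one]
  unfold coshSeries
  linear_combination (-(2:A⟦X⟧) * C 2⁻¹ ^ 2) * hpos - 2 * C 2⁻¹ ^ 2 * hneg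
    - 4 * C 2⁻¹ ^ 2 * hmix
    - (C 2⁻¹ * (rescale (2 * t) (exp A) + rescale (-(2 * t)) (exp A)) + 2 * C 2⁻¹ + 1) * hhalf

theorem coeff_coshSeries (t : A) (n : ℕ) :
    coeff n (coshSeries t) = if Even n then t ^ n / n ! else 0 := by
  unfold coshSeries
  rw [coeff_C_mul, map_add, coeff_rescale, coeff_rescale, coeff_exp]
  rcases Nat.even_or_odd n with h | h
  · rw [if_pos h, h.neg_pow, map_div₀, map_one, map_natCast]; ring
  · rw [if_neg (Nat.not_even_iff_odd.mpr h), h.neg_pow]; ring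

theorem coeff_coshSeries_mul_egf (t : A) (f : ℕ → A) (N : ℕ) :
    coeff N (coshSeries t * egf f) =
      (∑ k ∈ range (N / 2 + 1), (N.choose (2 * k) : A) * t ^ (2 * k) * f (N - 2 * k)) /
        N ! := by
  have hterm : ∀ m ∈ range (N + 1), coeff m (coshSeries t) * coeff (N - m) (egf f) =
      if Even m then (N.choose m : A) * t ^ m * f (N - m) / N ! else 0 := by
    intro m hm
    have hfact := Nat.choose_mul_factorial_mul_factorial (mem_range_succ_iff.mp hm)
    rw [coeff_coshSeries, egf, coeff_mk]
    split_ifs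
    · have hchoose : (N.choose m : A) ≠ 0 := by
        exact_mod_cast (Nat.choose_pos (mem_range_succ_iff.mp hm)).ne'
      rw [← hfact]; push_cast; field_simp
    · rw [zero_mul]
  rw [coeff_mul, Nat.sum_antidiagonal_eq_sum_range_succ_mk, sum_congr rfl hterm,
    sum_range_ite_even, sum_div]

end

theorem sum_range_succ_eq_add_sum_Icc {M : Type*} [AddCommMonoid M] (f : ℕ → M) (N : ℕ) :
    ∑ k ∈ range (N + 1), f k = f 0 + ∑ k ∈ Icc 1 N, f k := by
  rw [range_eq_Ico, sum_eq_sum_Ico_succ_bot (by omega : 0 < N + 1), zero_add,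
    Ico_add_one_right_eq_Icc]

theorem E_succ (a : ℝ) (N : ℕ) :
    E a (N + 1) =
      -a * ∑ k ∈ Icc 1 ((N + 1) / 2), ((N + 1).choose (2 * k) : ℝ) * E a (N + 1 - 2 * k) := by
  rw [E, sum_attach (Icc 1 ((N + 1) / 2))
    (fun k => ((N + 1).choose (2 * k) : ℝ) * E a (N + 1 - 2 * k))]

theorem mul_egf_E_eq_one (a : ℝ) : (C a * coshSeries 1 + C (1 - a)) * egf (E a) = 1 := by
  ext N
  rw [add_mul, map_add, mul_assoc, coeff_C_mul, coeff_C_mul, coeff_coshSeries_mul_egf, coeff_one,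
    egf, coeff_mk]
  simp only [one_pow, mul_one]
  rcases N with _ | N
  · simp [E]
  · rw [sum_range_succ_eq_add_sum_Icc, if_neg N.succ_ne_zero]
    simp only [Nat.choose_zero_right, Nat.cast_one, one_mul, mul_zero, Nat.sub_zero]
    have h := E_succ a N
    field_simp
    linear_combination h

theorem sum_range_choose_two_pow_mul_E (a : ℝ) (n : ℕ) (hn : 1 ≤ n) :
    a ^ 2 *
        ∑ k ∈ range (n + 1), ((2 * n).choose (2 * k) : ℝ) * 2 ^ (2 * k) * E a (2 * n - 2 * k) =
      2 * a + (2 * (1 - a) ^ 2 - a ^ 2) * E a (2 * n) := by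
  have hE := mul_egf_E_eq_one a
  have hcosh := coshSeries_two_mul (1 : ℝ)
  rw [mul_one] at hcosh
  have hscaled : C (a ^ 2) * (coshSeries 2 * egf (E a)) =
      C (2 * a) * coshSeries 1 - C (2 * (1 - a)) + C (2 * (1 - a) ^ 2 - a ^ 2) * egf (E a) := by
    simp only [map_mul, map_sub, map_pow, map_ofNat, map_one] at hE ⊢
    -- `a cosh X · ε = 1 - (1 - a) ε`, applied twice
    linear_combination (2 * C a * coshSeries 1 - 2 * (1 - C a)) * hE +
      C a ^ 2 * egf (E a) * hcosh
  have hcoeff := congrArg (coeff (2 * n)) hscaled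
  rw [coeff_C_mul, coeff_coshSeries_mul_egf, map_add, map_sub, coeff_C_mul, coeff_C_mul,
    coeff_C, coeff_coshSeries, egf, coeff_mk, if_pos (even_two_mul n), if_neg (by omega),
    Nat.mul_div_cancel_left n two_pos] at hcoeff
  field_simp at hcoeff
  linear_combination hcoeff

theorem stmt7 (a : ℝ) (ha : a ≠ 0) (n : ℕ) (hn : 1 ≤ n) :
    ∑ k ∈ Finset.Icc 1 n, ((2 * n).choose (2 * k) : ℝ) * 2 ^ (2 * k) * E a (2 * n - 2 * k) =
      2 / a + (2 - 4 * a) / a ^ 2 * E a (2 * n) := by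
  have h := sum_range_choose_two_pow_mul_E a n hn
  rw [sum_range_succ_eq_add_sum_Icc] at h
  simp only [Nat.choose_zero_right, Nat.cast_one, mul_zero, pow_zero, one_mul, Nat.sub_zero] at h
  field_simp
  linear_combination h
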